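/- arXiv:1610.03331 — 6 statements merged into one kernel-verified Lean document; each statement's English description precedes it below -/
import Mathlib

section
/- Let B be a comeager subset of X = (2^ω)^ω (with the product topology). Then there exists a sequence ⟨C_n : n ∈ ω⟩ of perfect subsets of 2^ω such that the product ∏_{n∈ω} C_n is contained in B. -/
/-!
The product is found as a single uniform perfect set in `ℕ × ℕ → Bool`: all points that agree
with a fixed `y` off a set of free coordinates meeting every column in an infinite set. Such a
set is the product of its columns, each of which is perfect. The point `y` and the free
coordinates come from a fusion along dense open sets `D k` with `⋂ k, D k ⊆ B`: at stage `k`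
the finite part of `y` is extended so that every assignment of the finitely many coordinates
freed so far lands in `D k`, and one new coordinate is freed.
-/

open Set Function Filter Topology

namespace PolarizedMycielski

variable {ι : Type*}

lemma exists_finset_eqOn_subset_of_mem_nhds {U : Set (ι → Bool)} {x : ι → Bool} (hU : U ∈ 𝓝 x) :
    ∃ J : Finset ι, {z | EqOn z x J} ⊆ U := by
  rw [nhds_pi, Filter.mem_pi'] at hU
  obtain ⟨J, t, ht, hJU⟩ := hU
  exact ⟨J, fun z hz => hJU fun i hi => (hz hi).symm ▸ mem_of_mem_nhds (ht i)⟩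

lemma setOf_eqOn_eq_pi (y : ι → Bool) (G : Set ι) : {x | EqOn x y G} = G.pi fun i => {y i} :=
  rfl

lemma isOpen_setOf_eqOn (y : ι → Bool) (G : Finset ι) : IsOpen {x | EqOn x y G} :=
  setOf_eqOn_eq_pi y G ▸ isOpen_set_pi G.finite_toSet fun _ _ => isOpen_discrete _

lemma isClosed_setOf_eqOn (y : ι → Bool) (G : Set ι) : IsClosed {x | EqOn x y G} :=
  setOf_eqOn_eq_pi y G ▸ isClosed_set_pi fun _ _ => isClosed_discrete _

lemma exists_eqOn_subset_of_dense {D : Set (ι → Bool)} (hDo : IsOpen D) (hDd : Dense D)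
    (G : Finset ι) (y : ι → Bool) :
    ∃ (G' : Finset ι) (y' : ι → Bool), G ⊆ G' ∧ EqOn y' y G ∧ {x | EqOn x y' G'} ⊆ D := by
  classical
  obtain ⟨z, hzG, hzD⟩ :=
    hDd.inter_open_nonempty _ (isOpen_setOf_eqOn y G) ⟨y, eqOn_refl y G⟩
  obtain ⟨J, hJ⟩ := exists_finset_eqOn_subset_of_mem_nhds (hDo.mem_nhds hzD)
  exact ⟨G ∪ J, z, Finset.subset_union_left, hzG,
    fun x hx => hJ (hx.mono (by simp))⟩

lemma exists_eqOn_subset_of_dense_of_disjoint [DecidableEq ι] {D : Set (ι → Bool)}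
    (hDo : IsOpen D) (hDd : Dense D) (F : Finset ι) :
    ∀ (G : Finset ι) (y : ι → Bool), Disjoint F G →
      ∃ (G' : Finset ι) (y' : ι → Bool), G ⊆ G' ∧ Disjoint F G' ∧ EqOn y' y G ∧
        {x | EqOn x y' G'} ⊆ D := by
  induction F using Finset.induction_on with
  | empty =>
    intro G y _
    obtain ⟨G', y', hGG', hy', hD⟩ := exists_eqOn_subset_of_dense hDo hDd G y
    exact ⟨G', y', hGG', Finset.disjoint_empty_left _, hy', hD⟩
  | insert a F haF ih =>
    intro G y hFG
    obtain ⟨haG, hFG⟩ := Finset.disjoint_insert_left.mp hFG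
    -- Settle `D` for `a = true`, then for `a = false`, then release `a` again.
    obtain ⟨G₁, y₁, hG₁, hFG₁, hy₁, hD₁⟩ :=
      ih (insert a G) (update y a true) (Finset.disjoint_insert_right.mpr ⟨haF, hFG⟩)
    obtain ⟨G₂, y₂, hG₂, hFG₂, hy₂, hD₂⟩ := ih G₁ (update y₁ a false) hFG₁
    have haG₁ : a ∈ G₁ := hG₁ (Finset.mem_insert_self a G)
    have hy₂₁ : ∀ i ∈ G₁, i ≠ a → y₂ i = y₁ i := fun i hi hia => by
      rw [hy₂ (Finset.mem_coe.mpr hi), update_of_ne hia]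
    refine ⟨G₂.erase a, y₂, ?_, ?_, ?_, ?_⟩
    · intro i hi
      have hia : i ≠ a := ne_of_mem_of_not_mem hi haG
      exact Finset.mem_erase.mpr ⟨hia, hG₂ (hG₁ (Finset.mem_insert_of_mem hi))⟩
    · exact Finset.disjoint_insert_left.mpr
        ⟨Finset.notMem_erase a G₂, hFG₂.mono_right (Finset.erase_subset a G₂)⟩
    · intro i hi
      have hia : i ≠ a := ne_of_mem_of_not_mem hi haG
      rw [hy₂₁ i (hG₁ (Finset.mem_insert_of_mem hi)) hia,
        hy₁ (Finset.mem_coe.mpr (Finset.mem_insert_of_mem hi)), update_of_ne hia]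
    · intro x hx
      cases hxa : x a
      · refine hD₂ fun i hi => ?_
        rcases eq_or_ne i a with rfl | hia
        · rw [hxa, hy₂ (Finset.mem_coe.mpr haG₁), update_self]
        · exact hx (Finset.mem_erase.mpr ⟨hia, hi⟩)
      · refine hD₁ fun i hi => ?_
        rcases eq_or_ne i a with rfl | hia
        · rw [hxa, hy₁ (Finset.mem_coe.mpr (Finset.mem_insert_self _ G)), update_self]
        · rw [hx (Finset.mem_erase.mpr ⟨hia, hG₂ hi⟩), hy₂₁ i hi hia]

lemma exists_iInter_dense_isOpen_subset {X : Type*} [TopologicalSpace X] [BaireSpace X]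
    {s : Set X} (hs : s ∈ residual X) :
    ∃ D : ℕ → Set X, (∀ k, IsOpen (D k)) ∧ (∀ k, Dense (D k)) ∧ ⋂ k, D k ⊆ s := by
  obtain ⟨t, hts, htG, htd⟩ := mem_residual.mp hs
  obtain ⟨D, hDo, rfl⟩ := isGδ_iff_eq_iInter_nat.mp htG
  exact ⟨D, hDo, fun k => htd.mono (iInter_subset D k), hts⟩

/-- A finite partial point `val` on `dom`, together with finitely many coordinates `free` that
are promised never to enter the domain. -/
structure Approx (ι : Type*) where
  free : Finset ι
  dom : Finset ι
  val : ι → Bool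
  disjoint : Disjoint free dom

namespace Approx

instance : Inhabited (Approx ι) := ⟨⟨∅, ∅, fun _ => false, Finset.disjoint_empty_left _⟩⟩

def cylinder (a : Approx ι) : Set (ι → Bool) := {x | EqOn x a.val a.dom}

def Extends (b a : Approx ι) : Prop := a.free ⊆ b.free ∧ a.dom ⊆ b.dom ∧ EqOn b.val a.val a.dom

lemma Extends.cylinder_subset {a b : Approx ι} (h : b.Extends a) : b.cylinder ⊆ a.cylinder :=
  fun _ hx _ hi => (hx (h.2.1 hi)).trans (h.2.2 hi)

lemma exists_extends {D : Set (ι → Bool)} (hDo : IsOpen D) (hDd : Dense D) {P : Set ι}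
    (hP : P.Infinite) (a : Approx ι) :
    ∃ b : Approx ι, b.Extends a ∧ b.cylinder ⊆ D ∧ ∃ p ∈ P, p ∈ b.free := by
  classical
  obtain ⟨G, y, haG, hFG, hy, hD⟩ :=
    exists_eqOn_subset_of_dense_of_disjoint hDo hDd a.free a.dom a.val a.disjoint
  obtain ⟨p, hpP, hp⟩ := hP.exists_notMem_finset (a.free ∪ G)
  rw [Finset.mem_union, not_or] at hp
  refine ⟨⟨insert p a.free, G, y, Finset.disjoint_insert_left.mpr ⟨hp.2, hFG⟩⟩,
    ⟨Finset.subset_insert p a.free, haG, hy⟩, hD, p, hpP, Finset.mem_insert_self p a.free⟩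

lemma exists_seq_extends {B : Set (ι → Bool)} (hB : B ∈ residual (ι → Bool)) {P : ℕ → Set ι}
    (hP : ∀ k, (P k).Infinite) :
    ∃ a : ℕ → Approx ι, (∀ k, (a (k + 1)).Extends (a k)) ∧ ⋂ k, (a k).cylinder ⊆ B ∧
      ∀ k, ∃ p ∈ P k, p ∈ (a (k + 1)).free := by
  obtain ⟨D, hDo, hDd, hDB⟩ := exists_iInter_dense_isOpen_subset hB
  choose next hext hD hfree using fun k => exists_extends (hDo k) (hDd k) (hP k)
  let a : ℕ → Approx ι := fun k => Nat.rec default next k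
  refine ⟨a, fun k => hext k (a k), fun x hx => hDB ?_, fun k => hfree k (a k)⟩
  exact mem_iInter.mpr fun k => hD k (a k) (mem_iInter.mp hx (k + 1))

lemma notMem_dom_of_mem_free {a : ℕ → Approx ι} (hext : ∀ k, (a (k + 1)).Extends (a k))
    {k : ℕ} {p : ι} (hp : p ∈ (a k).free) (m : ℕ) : p ∉ (a m).dom := by
  have hfree : Monotone fun k => (a k).free := monotone_nat_of_le_succ fun k => (hext k).1
  have hdom : Monotone fun k => (a k).dom := monotone_nat_of_le_succ fun k => (hext k).2.1
  rcases le_total k m with hkm | hmk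
  · exact Finset.disjoint_left.mp (a m).disjoint (hfree hkm hp)
  · exact fun hpm => Finset.disjoint_left.mp (a k).disjoint hp (hdom hmk hpm)

lemma nonempty_iInter_cylinder {a : ℕ → Approx ι} (hext : ∀ k, (a (k + 1)).Extends (a k)) :
    (⋂ k, (a k).cylinder).Nonempty :=
  IsCompact.nonempty_iInter_of_sequence_nonempty_isCompact_isClosed _
    (fun k => (hext k).cylinder_subset) (fun k => ⟨(a k).val, eqOn_refl _ _⟩)
    (isClosed_setOf_eqOn _ _).isCompact fun _ => isClosed_setOf_eqOn _ _

end Approx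
lemma perfect_setOf_forall_eqOn {G : ℕ → Set ι} (y : ℕ → ι → Bool)
    (hfree : (⋃ k, G k)ᶜ.Infinite) : Perfect {z : ι → Bool | ∀ k, EqOn z (y k) (G k)} := by
  classical
  refine ⟨ofPred_forall (fun k z => EqOn z (y k) (G k)) ▸
    isClosed_iInter fun k => isClosed_setOf_eqOn (y k) (G k), ?_⟩
  refine preperfect_iff_nhds.mpr fun z hz U hU => ?_
  obtain ⟨J, hJ⟩ := exists_finset_eqOn_subset_of_mem_nhds hU
  obtain ⟨j, hjG, hjJ⟩ := hfree.exists_notMem_finset J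
  simp only [mem_compl_iff, mem_iUnion, not_exists] at hjG
  -- Flipping a coordinate that no `G k` constrains stays inside the set.
  refine ⟨update z j (!z j), ⟨hJ fun i hi => ?_, fun k i hi => ?_⟩, fun h => ?_⟩
  · exact update_of_ne (ne_of_mem_of_not_mem hi hjJ) _ _
  · rw [update_of_ne (ne_of_mem_of_not_mem hi (hjG k))]
    exact hz k hi
  · simpa using congrFun h j

lemma infinite_setOf_fst_eq_and_lt_snd (c M : ℕ) : {p : ℕ × ℕ | p.1 = c ∧ M < p.2}.Infinite :=
  infinite_of_injective_forall_mem (f := fun j => (c, M + 1 + j))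
    (fun _ _ h => by simpa using h) (fun j => ⟨rfl, by omega⟩)

end PolarizedMycielski

open PolarizedMycielski

/-- **Polarized Mycielski theorem** for infinite sequences: for any comeager subset `B`
of `(2^ω)^ω` there is a sequence of perfect subsets of Cantor space whose product is
contained in `B`. -/
theorem polarized_mycielski (B : Set (ℕ → ℕ → Bool)) (hB : B ∈ residual (ℕ → ℕ → Bool)) :
    ∃ C : ℕ → Set (ℕ → Bool),
      (∀ n, Perfect (C n) ∧ (C n).Nonempty) ∧
      {x : ℕ → ℕ → Bool | ∀ n, x n ∈ C n} ⊆ B := by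
  have hB' : Homeomorph.piCurry ⁻¹' B ∈ residual (ℕ × ℕ → Bool) :=
    tendsto_residual_of_isOpenMap Homeomorph.piCurry.continuous Homeomorph.piCurry.isOpenMap hB
  -- Stage `Nat.pair n M` reserves a free coordinate in column `n` beyond `M`.
  obtain ⟨a, hext, hcyl, hfree⟩ := Approx.exists_seq_extends hB' fun k =>
    infinite_setOf_fst_eq_and_lt_snd (Nat.unpair k).1 (Nat.unpair k).2
  obtain ⟨w, hw⟩ := Approx.nonempty_iInter_cylinder hext
  refine ⟨fun n => {z | ∀ k, EqOn z ((a k).val ∘ Prod.mk n) (Prod.mk n ⁻¹' (a k).dom)},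
    fun n => ⟨perfect_setOf_forall_eqOn _ ?_, ?_⟩, fun x hx => hcyl (a := uncurry x) ?_⟩
  · refine infinite_of_forall_exists_gt fun M => ?_
    obtain ⟨⟨n', j⟩, ⟨hn', hj⟩, hp⟩ := hfree (Nat.pair n M)
    simp only [Nat.unpair_pair] at hn' hj
    subst hn'
    refine ⟨j, ?_, hj⟩
    simpa using fun m => Approx.notMem_dom_of_mem_free hext hp m
  · exact ⟨w ∘ Prod.mk n, fun k j hj => mem_iInter.mp hw k hj⟩
  · exact mem_iInter.mpr fun k p hp => hx p.1 k hp
end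

section
/- Let k ∈ ω and let R be a meager k-ary relation on (2^ω)^ω. Then for each i < k there is a sequence ⟨C_n^i : n ∈ ω⟩ of perfect subsets of 2^ω such that no k-tuple (x_0, …, x_{k−1}) with x_i ∈ ∏_{n∈ω} C_n^i for each i < k belongs to R. -/
/-!
Cover `R` by nowhere dense sets `F m`. For every coordinate `j` we build a continuous map
`f j : 2^ω → 2^ω` as a limit of finite strings `T m j a`, where at stage `m` the string depends
only on the first `m - j` bits of the branch `a`. Passing from stage `m` to `m + 1`, every
coordinate `j ≤ m` first appends the bit `a (m - j)`, so that different branches eventually get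
different images and `range (f j)` is perfect; then, since only finitely many patterns of
relevant bits occur, the strings can be lengthened pattern by pattern until the basic box they
determine misses `F m`. Hence `∏ j, range (f j)` misses every `F m`. A countable index set is
reduced to `ℕ` by precomposing with an injection into `ℕ`, which is an open map, and the `k`-ary
polarized statement is the case of the index set `Fin k × ℕ`.
-/

namespace PolarizedMycielski

open Set Topology Function PiNat

lemma exists_cylinder_subset_of_mem_nhds {E : ℕ → Type*} [∀ n, TopologicalSpace (E n)]
    [∀ n, DiscreteTopology (E n)] {x : ∀ n, E n} {U : Set (∀ n, E n)} (hU : U ∈ 𝓝 x) :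
    ∃ M, cylinder x M ⊆ U := by
  obtain ⟨_, ⟨y, M, rfl⟩, hx, hsub⟩ := (isTopologicalBasis_cylinders E).mem_nhds_iff.1 hU
  exact ⟨M, mem_cylinder_iff_eq.1 hx ▸ hsub⟩

lemma exists_pi_cylinder_subset_of_mem_nhds {α : Type*} [TopologicalSpace α] [DiscreteTopology α]
    {x : ℕ → ℕ → α} {U : Set (ℕ → ℕ → α)} (hU : U ∈ 𝓝 x) :
    ∃ M, (Iio M).pi (fun j => cylinder (x j) M) ⊆ U := by
  rw [nhds_pi, Filter.mem_pi'] at hU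
  obtain ⟨I, t, ht, hsub⟩ := hU
  choose n hn using fun j => exists_cylinder_subset_of_mem_nhds (ht j)
  obtain ⟨M, hM⟩ := I.exists_nat_subset_range
  refine ⟨M + I.sup n, fun y hy => hsub fun j hj => hn j ?_⟩
  have hjM : j < M + I.sup n := by have := Finset.mem_range.1 (hM hj); omega
  exact cylinder_anti _ (by have := Finset.le_sup (f := n) hj; omega) (hy j hjM)

lemma continuous_of_forall_mem_cylinder {E : ℕ → Type*} [∀ n, TopologicalSpace (E n)]
    [∀ n, DiscreteTopology (E n)] {β : Type*} [TopologicalSpace β] {g : (∀ n, E n) → β} (n : ℕ)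
    (h : ∀ a b, b ∈ cylinder a n → g b = g a) : Continuous g :=
  IsLocallyConstant.continuous <| (IsLocallyConstant.iff_eventually_eq g).2 fun a =>
    Filter.mem_of_superset ((isOpen_cylinder E a n).mem_nhds (self_mem_cylinder a n)) (h a)

lemma isOpenMap_comp_right {ι κ X : Type*} [TopologicalSpace X] {e : ι → κ} (he : Injective e) :
    IsOpenMap fun y : κ → X => y ∘ e := by
  refine IsOpenMap.of_sections fun y => ⟨fun x => extend e x y, ?_, ?_, fun x => extend_comp he x y⟩
  · refine (continuous_pi fun k => ?_).continuousAt
    by_cases hk : ∃ i, e i = k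
    · obtain ⟨i, rfl⟩ := hk
      simpa only [he.extend_apply] using continuous_apply i
    · simpa only [extend_apply' _ _ _ hk] using continuous_const
  · funext k
    by_cases hk : ∃ i, e i = k
    · obtain ⟨i, rfl⟩ := hk
      exact he.extend_apply _ _ i
    · exact extend_apply' _ _ _ hk

lemma _root_.IsMeagre.exists_nat_isNowhereDense {X : Type*} [TopologicalSpace X] {s : Set X}
    (hs : IsMeagre s) : ∃ F : ℕ → Set X, (∀ n, IsNowhereDense (F n)) ∧ s ⊆ ⋃ n, F n := by
  obtain ⟨S, hS, hScount, hsS⟩ := isMeagre_iff_countable_union_isNowhereDense.1 hs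
  obtain ⟨F, hF⟩ := (hScount.insert ∅).exists_eq_range (insert_nonempty _ _)
  refine ⟨F, fun n => ?_, hsS.trans fun x hx => ?_⟩
  · rcases (hF ▸ mem_range_self n : F n ∈ insert ∅ S) with h | h
    · exact h ▸ isNowhereDense_empty
    · exact hS _ h
  · obtain ⟨t, ht, hxt⟩ := mem_sUnion.1 hx
    obtain ⟨n, rfl⟩ : t ∈ range F := hF ▸ mem_insert_of_mem _ ht
    exact mem_iUnion.2 ⟨n, hxt⟩

def curryHomeomorph (α β X : Type*) [TopologicalSpace X] : (α × β → X) ≃ₜ (α → β → X) where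
  toEquiv := Equiv.curry α β X
  continuous_toFun := continuous_pi fun a => continuous_pi fun b => continuous_apply (a, b)
  continuous_invFun := continuous_pi fun p => (continuous_apply p.2).comp (continuous_apply p.1)

lemma _root_.List.IsPrefix.getD_eq {α : Type*} {t t' : List α} (h : t <+: t') {i : ℕ}
    (hi : i < t.length) (d : α) : t'.getD i d = t.getD i d := by
  rw [List.getD_eq_getElem _ _ hi, List.getD_eq_getElem _ _ (hi.trans_le h.length_le),
    h.getElem hi]

def prefixCylinder (t : List Bool) : Set (ℕ → Bool) := cylinder (fun i => t.getD i false) t.length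

def prefixBox (u : ℕ → List Bool) : Set (ℕ → ℕ → Bool) := univ.pi fun j => prefixCylinder (u j)

lemma prefixCylinder_anti {t t' : List Bool} (h : t <+: t') :
    prefixCylinder t' ⊆ prefixCylinder t := fun y hy i hi => by
  rw [hy i (hi.trans_le h.length_le)]
  exact h.getD_eq hi false

lemma prefixBox_anti {u u' : ℕ → List Bool} (h : ∀ j, u j <+: u' j) :
    prefixBox u' ⊆ prefixBox u :=
  pi_mono fun j _ => prefixCylinder_anti (h j)

lemma prefixCylinder_subset_cylinder {t : List Bool} {x : ℕ → Bool}
    (hx : x ∈ prefixCylinder t) :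
    prefixCylinder t ⊆ cylinder x t.length := by
  rw [prefixCylinder, ← mem_cylinder_iff_eq.1 hx]

lemma prefixCylinder_ofFn (y : ℕ → Bool) (n : ℕ) :
    prefixCylinder (List.ofFn fun i : Fin n => y i) = cylinder y n := by
  ext z
  simp +contextual [prefixCylinder, List.getD_eq_getElem?_getD]

lemma isPrefix_ofFn_of_mem_prefixCylinder {t : List Bool} {y : ℕ → Bool}
    (hy : y ∈ prefixCylinder t) {n : ℕ} (hn : t.length ≤ n) :
    t <+: List.ofFn fun i : Fin n => y i := by
  rw [List.prefix_iff_eq_take]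
  refine List.ext_getElem (by simp [hn]) fun i hi _ => ?_
  rw [List.getElem_take, List.getElem_ofFn, hy i hi]
  exact (List.getD_eq_getElem _ _ hi).symm

lemma isOpen_prefixBox {u : ℕ → List Bool} {K : ℕ} (hK : ∀ j ≥ K, u j = []) :
    IsOpen (prefixBox u) := by
  have : prefixBox u = (Iio K).pi fun j => prefixCylinder (u j) := by
    ext x
    refine ⟨fun hx j _ => hx j trivial, fun hx j _ => ?_⟩
    by_cases hj : j < K
    · exact hx j hj
    · simp [hK j (not_lt.1 hj), prefixCylinder]
  rw [this]
  exact isOpen_set_pi (finite_Iio K) fun j _ => isOpen_cylinder _ _ _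

lemma exists_prefixBox_subset_of_mem_nhds {p : ℕ → List Bool} {K : ℕ} (hK : ∀ j ≥ K, p j = [])
    {x : ℕ → ℕ → Bool} (hx : x ∈ prefixBox p) {U : Set (ℕ → ℕ → Bool)} (hU : U ∈ 𝓝 x) :
    ∃ q : ℕ → List Bool, (∀ j, p j <+: q j) ∧ (∃ N, ∀ j ≥ N, q j = []) ∧ prefixBox q ⊆ U := by
  obtain ⟨M, hM⟩ := exists_pi_cylinder_subset_of_mem_nhds hU
  refine ⟨fun j => if j < M + K then List.ofFn (fun i : Fin (M + (p j).length) => x j i) else [],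
    fun j => ?_, ⟨M + K, fun j hj => if_neg (by omega)⟩, fun y hy => hM fun j hj => ?_⟩
  · dsimp only
    split_ifs with hj
    · exact isPrefix_ofFn_of_mem_prefixCylinder (hx j trivial) (by omega)
    · rw [hK j (by omega)]
  · have hjM : j < M + K := by have : j < M := hj; omega
    have hyj := hy j trivial
    simp only [hjM, if_true, prefixCylinder_ofFn] at hyj
    exact cylinder_anti _ (by omega) hyj

lemma exists_prefixBox_disjoint {F : Set (ℕ → ℕ → Bool)} (hF : IsNowhereDense F)
    {p : ℕ → List Bool} {K : ℕ} (hK : ∀ j ≥ K, p j = []) :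
    ∃ q : ℕ → List Bool, (∀ j, p j <+: q j) ∧ (∃ N, ∀ j ≥ N, q j = []) ∧
      Disjoint (prefixBox q) F := by
  have hne : (prefixBox p).Nonempty := ⟨fun j i => (p j).getD i false, fun _ _ _ _ => rfl⟩
  obtain ⟨x, hx, hxF⟩ := (interior_eq_empty_iff_dense_compl.1 hF).inter_open_nonempty _
    (isOpen_prefixBox hK) hne
  obtain ⟨q, hpq, hq, hqF⟩ :=
    exists_prefixBox_subset_of_mem_nhds hK hx (isClosed_closure.isOpen_compl.mem_nhds hxF)
  exact ⟨q, hpq, hq,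
    subset_compl_iff_disjoint_right.1 (hqF.trans (compl_subset_compl.2 subset_closure))⟩

section Schemes

/-- `T j a` is the initial segment, fixed so far, of the image of the branch `a` in
coordinate `j`. -/
abbrev Approximation := ℕ → (ℕ → Bool) → List Bool

def IsLocal (d : ℕ → ℕ) (T : Approximation) : Prop :=
  ∀ j a b, b ∈ cylinder a (d j) → T j b = T j a

def HasFiniteSupport (T : Approximation) : Prop := ∃ K, ∀ j ≥ K, ∀ a, T j a = []

variable {F : Set (ℕ → ℕ → Bool)} {d : ℕ → ℕ}

lemma exists_extension_disjoint_of_pattern (hF : IsNowhereDense F) {T : Approximation}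
    (hT : IsLocal d T) (hfin : HasFiniteSupport T) (a : ℕ → ℕ → Bool) :
    ∃ T' : Approximation, (∀ j b, T j b <+: T' j b) ∧ IsLocal d T' ∧ HasFiniteSupport T' ∧
      Disjoint (prefixBox fun j => T' j (a j)) F := by
  classical
  obtain ⟨K, hK⟩ := hfin
  obtain ⟨q, hpq, ⟨N, hN⟩, hqF⟩ :=
    exists_prefixBox_disjoint hF (p := fun j => T j (a j)) fun j hj => hK j hj _
  refine ⟨fun j b => if b ∈ cylinder (a j) (d j) then q j else T j b, fun j b => ?_,
    fun j b c hc => ?_, ⟨max K N, fun j hj b => ?_⟩, by simpa [self_mem_cylinder] using hqF⟩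
  · dsimp only
    split_ifs with hb
    · exact hT j _ _ hb ▸ hpq j
    · exact List.prefix_refl _
  · have hcb : c ∈ cylinder (a j) (d j) ↔ b ∈ cylinder (a j) (d j) := by
      rw [mem_cylinder_iff_eq, mem_cylinder_iff_eq, mem_cylinder_iff_eq.1 hc]
    simp only [hcb, hT j b c hc]
  · dsimp only
    split_ifs
    · exact hN j (le_of_max_le_right hj)
    · exact hK j (le_of_max_le_left hj) b

lemma exists_extension_disjoint_of_finite (hF : IsNowhereDense F) {P : Set (ℕ → ℕ → Bool)}
    (hP : P.Finite) {T : Approximation} (hT : IsLocal d T) (hfin : HasFiniteSupport T) :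
    ∃ T' : Approximation, (∀ j b, T j b <+: T' j b) ∧ IsLocal d T' ∧ HasFiniteSupport T' ∧
      ∀ a ∈ P, Disjoint (prefixBox fun j => T' j (a j)) F := by
  induction P, hP using Set.Finite.induction_on generalizing T with
  | empty => exact ⟨T, fun _ _ => List.prefix_refl _, hT, hfin, by simp⟩
  | @insert a P _ _ ih =>
    obtain ⟨T₁, hTT₁, hT₁, hfin₁, hT₁F⟩ := exists_extension_disjoint_of_pattern hF hT hfin a
    obtain ⟨T₂, hT₁T₂, hT₂, hfin₂, hT₂F⟩ := ih hT₁ hfin₁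
    refine ⟨T₂, fun j b => (hTT₁ j b).trans (hT₁T₂ j b), hT₂, hfin₂, ?_⟩
    rintro a' (rfl | ha')
    · exact hT₁F.mono_left (prefixBox_anti fun j => hT₁T₂ j _)
    · exact hT₂F a' ha'

/-- At stage `n` a branch family `a` acts only through `truncate n a`, which has finitely many
values: these are the patterns a stage has to deal with. -/
def truncate (n : ℕ) (a : ℕ → ℕ → Bool) : ℕ → ℕ → Bool :=
  fun j i => if j < n ∧ i < n then a j i else false

lemma finite_range_truncate (n : ℕ) : (range (truncate n)).Finite := by
  refine (finite_range fun π : Fin n → Fin n → Bool =>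
    fun j i => if h : j < n ∧ i < n then π ⟨j, h.1⟩ ⟨i, h.2⟩ else false).subset ?_
  rintro _ ⟨a, rfl⟩
  refine ⟨fun j i => a j i, funext fun j => funext fun i => ?_⟩
  by_cases h : j < n ∧ i < n <;> simp [truncate, h]

lemma truncate_mem_cylinder (n : ℕ) (a : ℕ → ℕ → Bool) (j : ℕ) :
    truncate n a j ∈ cylinder (a j) (n - j) := fun i hi => if_pos ⟨by omega, by omega⟩

/-- At stage `m` coordinate `j` has split `m - j` times (not at all when `m ≤ j`). -/
def IsStage (m : ℕ) (T : Approximation) : Prop := IsLocal (m - ·) T ∧ HasFiniteSupport T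

def appendBit (m : ℕ) (T : Approximation) : Approximation := fun j a =>
  if j ≤ m then T j a ++ [a (m - j)] else T j a

lemma isPrefix_appendBit (m : ℕ) (T : Approximation) (j : ℕ) (a : ℕ → Bool) :
    T j a <+: appendBit m T j a := by
  unfold appendBit
  split_ifs
  exacts [List.prefix_append _ _, List.prefix_refl _]

lemma IsStage.appendBit {m : ℕ} {T : Approximation} (hT : IsStage m T) :
    IsStage (m + 1) (appendBit m T) := by
  obtain ⟨hloc, K, hK⟩ := hT
  refine ⟨fun j a b hb => ?_, max K (m + 1), fun j hj a => ?_⟩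
  · replace hb : b ∈ cylinder a (m + 1 - j) := hb
    have hTab : T j b = T j a := hloc j a b (cylinder_anti _ (show m - j ≤ m + 1 - j by omega) hb)
    unfold PolarizedMycielski.appendBit
    split_ifs with hj
    · rw [hTab, hb (m - j) (by omega)]
    · exact hTab
  · unfold PolarizedMycielski.appendBit
    rw [if_neg (by omega), hK j (le_of_max_le_left hj)]

lemma exists_next_stage (hF : IsNowhereDense F) {m : ℕ} {T : Approximation} (hT : IsStage m T) :
    ∃ T' : Approximation, IsStage (m + 1) T' ∧ (∀ j a, appendBit m T j a <+: T' j a) ∧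
      ∀ a : ℕ → ℕ → Bool, Disjoint (prefixBox fun j => T' j (a j)) F := by
  obtain ⟨T', hext, hloc, hfin, hT'F⟩ :=
    exists_extension_disjoint_of_finite hF (finite_range_truncate (m + 1)) hT.appendBit.1
      hT.appendBit.2
  refine ⟨T', ⟨hloc, hfin⟩, hext, fun a => ?_⟩
  have hpattern : (fun j => T' j (a j)) = fun j => T' j (truncate (m + 1) a j) :=
    funext fun j => (hloc j _ _ (truncate_mem_cylinder _ a j)).symm
  rw [hpattern]
  exact hT'F _ (mem_range_self a)

theorem exists_fusion_sequence {F : ℕ → Set (ℕ → ℕ → Bool)} (hF : ∀ m, IsNowhereDense (F m)) :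
    ∃ T : ℕ → Approximation, (∀ m, IsLocal (m - ·) (T m)) ∧
      (∀ m j a, appendBit m (T m) j a <+: T (m + 1) j a) ∧
      ∀ m (a : ℕ → ℕ → Bool), Disjoint (prefixBox fun j => T (m + 1) j (a j)) (F m) := by
  have step : ∀ m (T : {T // IsStage m T}), ∃ T' : {T' // IsStage (m + 1) T'},
      (∀ j a, appendBit m T j a <+: T'.1 j a) ∧
        ∀ a : ℕ → ℕ → Bool, Disjoint (prefixBox fun j => T'.1 j (a j)) (F m) :=
    fun m T => let ⟨T', hT', hext, hT'F⟩ := exists_next_stage (hF m) T.2; ⟨⟨T', hT'⟩, hext, hT'F⟩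
  choose next hnext using step
  let T : ∀ m, {T // IsStage m T} := fun m =>
    Nat.rec ⟨fun _ _ => [], fun _ _ _ _ => rfl, 0, fun _ _ _ => rfl⟩ next m
  exact ⟨fun m => (T m).1, fun m => (T m).2.1, fun m => (hnext m (T m)).1,
    fun m => (hnext m (T m)).2⟩

end Schemes

section Limit

/-- Bit `i` is read at stage `j + i + 1`, where the string is already longer than `i`. -/
def limitMap (T : ℕ → Approximation) (j : ℕ) (a : ℕ → Bool) : ℕ → Bool :=
  fun i => (T (j + i + 1) j a).getD i false

variable {T : ℕ → Approximation}

lemma isPrefix_of_le (hsucc : ∀ m j a, appendBit m (T m) j a <+: T (m + 1) j a)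
    {m m' : ℕ} (h : m ≤ m') (j : ℕ) (a : ℕ → Bool) : T m j a <+: T m' j a := by
  induction m', h using Nat.le_induction with
  | base => exact List.prefix_refl _
  | succ m' _ ih => exact ih.trans ((isPrefix_appendBit _ _ j a).trans (hsucc m' j a))

lemma sub_le_length (hsucc : ∀ m j a, appendBit m (T m) j a <+: T (m + 1) j a)
    (m j : ℕ) (a : ℕ → Bool) : m - j ≤ (T m j a).length := by
  induction m with
  | zero => simp
  | succ m ih =>
    have hlen := (hsucc m j a).length_le
    unfold appendBit at hlen
    split_ifs at hlen with hj
    · simp only [List.length_append, List.length_singleton] at hlen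
      omega
    · omega

lemma limitMap_mem_prefixCylinder (hsucc : ∀ m j a, appendBit m (T m) j a <+: T (m + 1) j a)
    (m j : ℕ) (a : ℕ → Bool) : limitMap T j a ∈ prefixCylinder (T m j a) := by
  intro i hi
  have hi' : i < (T (j + i + 1) j a).length := by have := sub_le_length hsucc (j + i + 1) j a; omega
  rcases le_total m (j + i + 1) with h | h
  · exact (isPrefix_of_le hsucc h j a).getD_eq hi false
  · exact ((isPrefix_of_le hsucc h j a).getD_eq hi' false).symm

lemma limitMap_apply_length (hsucc : ∀ m j a, appendBit m (T m) j a <+: T (m + 1) j a)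
    {m j : ℕ} (hj : j ≤ m) (a : ℕ → Bool) :
    limitMap T j a (T m j a).length = a (m - j) := by
  have happend : T m j a ++ [a (m - j)] <+: T (m + 1) j a := by
    simpa [appendBit, hj] using hsucc m j a
  rw [limitMap_mem_prefixCylinder hsucc (m + 1) j a _ (by simpa using happend.length_le)]
  dsimp only
  rw [happend.getD_eq (by simp) false]
  simp

lemma continuous_limitMap (hloc : ∀ m, IsLocal (m - ·) (T m)) (j : ℕ) :
    Continuous (limitMap T j) :=
  continuous_pi fun i => continuous_of_forall_mem_cylinder (i + 1) fun a b hb => by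
    simp only [limitMap, hloc (j + i + 1) j a b (show b ∈ cylinder a (j + i + 1 - j) by
      rwa [show j + i + 1 - j = i + 1 by omega])]

theorem perfect_range_limitMap (hloc : ∀ m, IsLocal (m - ·) (T m))
    (hsucc : ∀ m j a, appendBit m (T m) j a <+: T (m + 1) j a) (j : ℕ) :
    Perfect (range (limitMap T j)) := by
  refine ⟨(isCompact_range (continuous_limitMap hloc j)).isClosed, preperfect_iff_nhds.2 ?_⟩
  rintro _ ⟨a, rfl⟩ U hU
  obtain ⟨M, hM⟩ := exists_cylinder_subset_of_mem_nhds hU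
  -- Flipping bit `M` of `a` keeps the stage-`(j + M)` string, hence the first `M` bits of the
  -- image, but changes the bit appended right after it.
  set a' := update a M (!a M)
  have hstage : T (j + M) j a' = T (j + M) j a :=
    hloc _ j a a' (by simpa using update_mem_cylinder a M (!a M))
  have hlen : M ≤ (T (j + M) j a).length := by simpa using sub_le_length hsucc (j + M) j a
  refine ⟨limitMap T j a', ⟨hM ?_, mem_range_self a'⟩, fun h => ?_⟩
  · have := limitMap_mem_prefixCylinder hsucc (j + M) j a'
    rw [hstage] at this
    exact cylinder_anti _ hlen
      (prefixCylinder_subset_cylinder (limitMap_mem_prefixCylinder hsucc _ j a) this)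
  · have hbit := congrFun h (T (j + M) j a).length
    rw [limitMap_apply_length hsucc (Nat.le_add_right j M), ← hstage,
      limitMap_apply_length hsucc (Nat.le_add_right j M)] at hbit
    simp [a'] at hbit

end Limit

theorem exists_perfect_pi_disjoint_of_isMeagre_nat {R : Set (ℕ → ℕ → Bool)} (hR : IsMeagre R) :
    ∃ C : ℕ → Set (ℕ → Bool), (∀ j, Perfect (C j) ∧ (C j).Nonempty) ∧ Disjoint (univ.pi C) R := by
  obtain ⟨F, hF, hRF⟩ := hR.exists_nat_isNowhereDense
  obtain ⟨T, hloc, hsucc, hTF⟩ := exists_fusion_sequence hF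
  refine ⟨fun j => range (limitMap T j),
    fun j => ⟨perfect_range_limitMap hloc hsucc j, range_nonempty _⟩, disjoint_left.2 ?_⟩
  intro x hx hxR
  choose a ha using fun j => hx j trivial
  obtain ⟨m, hm⟩ := mem_iUnion.1 (hRF hxR)
  refine disjoint_left.1 (hTF m a) (fun j _ => ?_) hm
  exact ha j ▸ limitMap_mem_prefixCylinder hsucc (m + 1) j (a j)

theorem exists_perfect_pi_disjoint_of_isMeagre {ι : Type*} [Countable ι]
    {R : Set (ι → ℕ → Bool)} (hR : IsMeagre R) :
    ∃ C : ι → Set (ℕ → Bool), (∀ i, Perfect (C i) ∧ (C i).Nonempty) ∧ Disjoint (univ.pi C) R := by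
  obtain ⟨e, he⟩ := Countable.exists_injective_nat ι
  obtain ⟨D, hD, hDR⟩ := exists_perfect_pi_disjoint_of_isMeagre_nat
    (hR.preimage_of_isOpenMap (continuous_pi fun i => continuous_apply (e i))
      (isOpenMap_comp_right he))
  refine ⟨fun i => D (e i), fun i => hD (e i), disjoint_left.2 fun x hx hxR => ?_⟩
  choose y hy using fun n => (hD n).2
  have hxy : extend e x y ∈ univ.pi D := fun n _ => by
    by_cases hn : ∃ i, e i = n
    · obtain ⟨i, rfl⟩ := hn
      simpa only [he.extend_apply] using hx i trivial
    · simpa only [extend_apply' _ _ _ hn] using hy n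
  exact disjoint_left.1 hDR hxy (by simpa only [mem_preimage, he.extend_apply])

end PolarizedMycielski

/-- Polarized Mycielski theorem for meager `k`-ary relations on `(2^ω)^ω`: if `R` is a
meager `k`-ary relation, there are, for each `i < k`, sequences of perfect subsets of
Cantor space such that no `k`-tuple from the corresponding products is `R`-related. -/
theorem polarized_mycielski_relation (k : ℕ) (R : Set (Fin k → ℕ → ℕ → Bool))
    (hR : IsMeagre R) :
    ∃ C : Fin k → ℕ → Set (ℕ → Bool),
      (∀ i n, Perfect (C i n) ∧ (C i n).Nonempty) ∧
      ∀ x : Fin k → ℕ → ℕ → Bool, (∀ i n, x i n ∈ C i n) → x ∉ R := by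
  let Φ := PolarizedMycielski.curryHomeomorph (Fin k) ℕ (ℕ → Bool)
  obtain ⟨C, hC, hCR⟩ := PolarizedMycielski.exists_perfect_pi_disjoint_of_isMeagre
    (hR.preimage_of_isOpenMap Φ.continuous Φ.isOpenMap)
  refine ⟨fun i n => C (i, n), fun i n => hC (i, n), fun x hx hxR => ?_⟩
  exact Set.disjoint_left.1 hCR (show Φ.symm x ∈ Set.univ.pi C from fun p _ => hx p.1 p.2)
    (by simpa using hxR)
end

section
/- In the forcing notion ℚ of finite approximations to a perfect set of Cohen reals, for any dense open set O ⊆ 2^ω, the set D_O = { q ∈ ℚ : ∀ s ∈ 2^{n_q}, [f_q(s)] ⊆ O } is dense in ℚ. -/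
/-- The forcing `ℚ` of finite approximations to a perfect set of Cohen reals:
a condition is a pair `(n, f)` with `f : 2^n → 2^{<ω}`. -/
def QCond : Type := Σ n : ℕ, (Fin n → Bool) → List Bool

/-- The extension relation on `ℚ`: `q ≤ p` iff `n_q ≥ n_p` and for each `s ∈ 2^{n_q}`,
`f_q(s)` end-extends `f_p(s ↾ n_p)`. -/
def QLe (q p : QCond) : Prop :=
  ∃ h : p.1 ≤ q.1, ∀ s : Fin q.1 → Bool, p.2 (fun i => s (Fin.castLE h i)) <+: q.2 s

/-- The basic clopen set `[t] = {x ∈ 2^ω : t ⊆ x}` of Cantor space. -/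
def cyl (t : List Bool) : Set (ℕ → Bool) :=
  {x | ∀ i : Fin t.length, x i = t.get i}

/-! Each `[f_p(s)]` is a nonempty open set, so by density it contains a point of `O`, and since
`O` is open some finite prefix of that point, extending `f_p(s)`, has its cylinder inside `O`.
Replacing every `f_p(s)` by such a prefix, without raising `n_p`, gives a condition in `D_O`
below `p`. -/

open PiNat

theorem PiNat.exists_cylinder_subset {E : ℕ → Type*} [∀ n, TopologicalSpace (E n)]
    [∀ n, DiscreteTopology (E n)] {s : Set (∀ n, E n)} (hs : IsOpen s) {x : ∀ n, E n}
    (hx : x ∈ s) : ∃ n, cylinder x n ⊆ s := by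
  obtain ⟨_, ⟨y, n, rfl⟩, hxy, hys⟩ :=
    (isTopologicalBasis_cylinders E).exists_subset_of_mem_open hx hs
  exact ⟨n, mem_cylinder_iff_eq.1 hxy ▸ hys⟩

theorem cyl_ofFn (x : ℕ → Bool) (n : ℕ) :
    cyl (List.ofFn fun i : Fin n => x i) = cylinder x n := by
  ext y
  simp [cyl, Fin.forall_iff]

theorem ofFn_eq_of_mem_cyl {t : List Bool} {x : ℕ → Bool} (hx : x ∈ cyl t) :
    List.ofFn (fun i : Fin t.length => x i) = t :=
  List.ext_get (by simp) fun i _ hi => by simpa using hx ⟨i, hi⟩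

theorem prefix_ofFn_of_mem_cyl {t : List Bool} {x : ℕ → Bool} (hx : x ∈ cyl t) {n : ℕ}
    (hn : t.length ≤ n) : t <+: List.ofFn fun i : Fin n => x i := by
  rw [List.prefix_iff_eq_take]
  refine List.ext_getElem (by simp [hn]) fun i hi _ => ?_
  simpa using (hx ⟨i, hi⟩).symm

theorem cyl_nonempty (t : List Bool) : (cyl t).Nonempty :=
  ⟨fun i => t.getD i false, fun i => by simp⟩

theorem cyl_eq_cylinder_of_mem {t : List Bool} {x : ℕ → Bool} (hx : x ∈ cyl t) :
    cyl t = cylinder x t.length := by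
  rw [← cyl_ofFn, ofFn_eq_of_mem_cyl hx]

theorem isOpen_cyl (t : List Bool) : IsOpen (cyl t) := by
  obtain ⟨x, hx⟩ := cyl_nonempty t
  rw [cyl_eq_cylinder_of_mem hx]
  exact isOpen_cylinder _ x _

theorem Dense.exists_prefix_cyl_subset {O : Set (ℕ → Bool)} (hdense : Dense O)
    (hopen : IsOpen O) (t : List Bool) : ∃ t', t <+: t' ∧ cyl t' ⊆ O := by
  obtain ⟨x, hxO, hxt⟩ := hdense.exists_mem_open (isOpen_cyl t) (cyl_nonempty t)
  obtain ⟨n, hn⟩ := exists_cylinder_subset hopen hxO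
  refine ⟨List.ofFn fun i : Fin (max n t.length) => x i,
    prefix_ofFn_of_mem_cyl hxt (le_max_right _ _), ?_⟩
  rw [cyl_ofFn]
  exact (cylinder_anti x (le_max_left _ _)).trans hn

theorem qLe_mk_of_forall_prefix (p : QCond) {f : (Fin p.1 → Bool) → List Bool}
    (hf : ∀ s, p.2 s <+: f s) : QLe ⟨p.1, f⟩ p :=
  ⟨le_rfl, hf⟩

/-- For any dense open `O ⊆ 2^ω`, the set
`D_O = { q ∈ ℚ : ∀ s ∈ 2^{n_q}, [f_q(s)] ⊆ O }` is dense in `ℚ`. -/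
theorem DO_dense (O : Set (ℕ → Bool)) (hopen : IsOpen O) (hdense : Dense O)
    (p : QCond) :
    ∃ q : QCond, QLe q p ∧ ∀ s : Fin q.1 → Bool, cyl (q.2 s) ⊆ O := by
  choose f hpf hfO using fun s => hdense.exists_prefix_cyl_subset hopen (p.2 s)
  exact ⟨⟨p.1, f⟩, qLe_mk_of_forall_prefix p hpf, hfO⟩
end

section
/- There is no Baire measurable maximal E₀-discrete set: if A ⊆ 2^ω has the Baire property and no two distinct elements of A are E₀-equivalent, then A is not maximal among E₀-discrete sets (equivalently, any E₀-discrete set with the Baire property is meager, and a meager E₀-discrete set cannot be maximal). -/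
/-!
If `A` is Baire measurable and not meagre, it is comeagre in some nonempty open set `U`. Flipping
one coordinate that lies beyond a cylinder around a point of `U` is a homeomorphism moving some
point of `U` back into `U`, so by the Baire category theorem some `z ∈ A` has its flip in `A`
as well: two distinct `E₀`-equivalent points. Hence `A` is meagre, and so is its `E₀`-saturation,
the union of its countably many images under finite coordinate flips; any point outside the
saturation can be added to `A`.
-/

/-- The equivalence relation `E₀` on Cantor space: equality on all but finitely many
coordinates. -/
def E0 (x y : ℕ → Bool) : Prop := ∀ᶠ n in Filter.atTop, x n = y n

/-- `A` is `E₀`-discrete: no two distinct elements of `A` are `E₀`-related. -/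
def E0Discrete (A : Set (ℕ → Bool)) : Prop :=
  ∀ x ∈ A, ∀ y ∈ A, E0 x y → x = y

open Filter Set Topology

section Baire

variable {X : Type*} [TopologicalSpace X]

theorem BaireMeasurableSet.isMeagre_or_exists_isMeagre_diff {s : Set X}
    (h : BaireMeasurableSet s) :
    IsMeagre s ∨ ∃ u, IsOpen u ∧ u.Nonempty ∧ IsMeagre (u \ s) := by
  obtain ⟨u, hu, hsu⟩ := h.residualEq_isOpen
  rcases u.eq_empty_or_nonempty with rfl | hne
  · exact .inl (eventuallyEq_empty.mp hsu)
  · refine .inr ⟨u, hu, hne, ?_⟩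
    filter_upwards [eventuallyEq_set.mp hsu] with x hx
    exact fun hxu => hxu.2 (hx.mpr hxu.1)

theorem exists_mem_and_apply_mem_of_isMeagre_diff [BaireSpace X] {s u : Set X} (hu : IsOpen u)
    (f : X ≃ₜ X) (hfu : (u ∩ f ⁻¹' u).Nonempty) (hus : IsMeagre (u \ s)) :
    ∃ z ∈ s, f z ∈ s := by
  have hres : (u \ s)ᶜ ∩ (f ⁻¹' (u \ s))ᶜ ∈ residual X :=
    inter_mem hus (hus.preimage_of_isOpenMap f.continuous f.isOpenMap)
  obtain ⟨z, ⟨hzu, hfzu⟩, hzs, hfzs⟩ :=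
    (dense_of_mem_residual hres).inter_open_nonempty _ (hu.inter (hu.preimage f.continuous)) hfu
  exact ⟨z, not_not.mp fun h => hzs ⟨hzu, h⟩, not_not.mp fun h => hfzs ⟨hfzu, h⟩⟩

end Baire

def flipCoords (F : Finset ℕ) : (ℕ → Bool) ≃ₜ (ℕ → Bool) :=
  Homeomorph.piCongrRight fun n =>
    if n ∈ F then Equiv.boolNot.toHomeomorphOfDiscrete else Homeomorph.refl Bool

theorem flipCoords_apply (F : Finset ℕ) (x : ℕ → Bool) (n : ℕ) :
    flipCoords F x n = if n ∈ F then !x n else x n := by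
  by_cases hn : n ∈ F <;> simp [flipCoords, hn, Equiv.toHomeomorphOfDiscrete, Equiv.boolNot]

theorem flipCoords_singleton_ne (m : ℕ) (x : ℕ → Bool) : flipCoords {m} x ≠ x := fun h => by
  simpa [flipCoords_apply] using congrFun h m

theorem e0_flipCoords (F : Finset ℕ) (x : ℕ → Bool) : E0 x (flipCoords F x) := by
  rw [E0, ← Nat.cofinite_eq_atTop]
  filter_upwards [F.eventually_cofinite_notMem] with n hn
  simp [flipCoords_apply, hn]

theorem E0.exists_flipCoords_eq {x y : ℕ → Bool} (h : E0 x y) : ∃ F, flipCoords F x = y := by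
  rw [E0, ← Nat.cofinite_eq_atTop, eventually_cofinite] at h
  refine ⟨h.toFinset, funext fun n => ?_⟩
  by_cases hn : x n = y n
  · simp [flipCoords_apply, hn]
  · simpa [flipCoords_apply, hn] using (Bool.eq_not.mpr (Ne.symm hn)).symm

theorem exists_flipCoords_singleton_mem {U : Set (ℕ → Bool)} (hU : IsOpen U) {x : ℕ → Bool}
    (hx : x ∈ U) : ∃ m, flipCoords {m} x ∈ U := by
  obtain ⟨_, ⟨y, n, rfl⟩, hxy, hyU⟩ :=
    (PiNat.isTopologicalBasis_cylinders fun _ => Bool).exists_subset_of_mem_open hx hU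
  refine ⟨n, hyU fun i hi => ?_⟩
  simpa [flipCoords_apply, hi.ne] using hxy i hi

theorem E0Discrete.isMeagre {A : Set (ℕ → Bool)} (hA : E0Discrete A)
    (hBP : BaireMeasurableSet A) : IsMeagre A := by
  refine hBP.isMeagre_or_exists_isMeagre_diff.resolve_right ?_
  rintro ⟨U, hU, ⟨x, hx⟩, hUA⟩
  obtain ⟨m, hm⟩ := exists_flipCoords_singleton_mem hU hx
  obtain ⟨z, hz, hfz⟩ :=
    exists_mem_and_apply_mem_of_isMeagre_diff hU (flipCoords {m}) ⟨x, hx, hm⟩ hUA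
  exact flipCoords_singleton_ne m z (hA z hz _ hfz (e0_flipCoords {m} z)).symm

theorem E0Discrete.insert {A : Set (ℕ → Bool)} (hA : E0Discrete A) {y : ℕ → Bool}
    (hy : ∀ a ∈ A, ¬E0 y a) : E0Discrete (insert y A) := by
  rintro p (rfl | hp) q (rfl | hq) hpq
  · rfl
  · exact absurd hpq (hy q hq)
  · exact absurd (EventuallyEq.symm hpq) (hy p hp)
  · exact hA p hp q hq hpq

/-- There is no Baire measurable maximal `E₀`-discrete set: any `E₀`-discrete set with
the Baire property is not maximal among `E₀`-discrete sets. -/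
theorem no_baire_maximal_E0_discrete (A : Set (ℕ → Bool))
    (hBP : BaireMeasurableSet A) (hA : E0Discrete A) :
    ∃ y : ℕ → Bool, y ∉ A ∧ E0Discrete (insert y A) := by
  have hsat : IsMeagre (⋃ F : Finset ℕ, flipCoords F ⁻¹' A) := isMeagre_iUnion fun F =>
    (hA.isMeagre hBP).preimage_of_isOpenMap (flipCoords F).continuous (flipCoords F).isOpenMap
  obtain ⟨y, hy⟩ := (dense_of_mem_residual hsat).nonempty
  simp only [mem_compl_iff, mem_iUnion, mem_preimage, not_exists] at hy
  have hyA : ∀ a ∈ A, ¬E0 y a := fun a ha hya => by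
    obtain ⟨F, rfl⟩ := hya.exists_flipCoords_eq
    exact hy F ha
  exact ⟨y, fun h => hyA y h (EventuallyEq.refl _ _), hA.insert hyA⟩
end

section
/- Every E₀-discrete subset of 2^ω with the Baire property is meager. -/
open Filter Set Topology Function PiNat

section Baire

variable {X : Type*} [TopologicalSpace X]

theorem BaireMeasurableSet.exists_isOpen_nonempty_eventually_mem {A : Set X}
    (hBP : BaireMeasurableSet A) (hA : ¬IsMeagre A) :
    ∃ U : Set X, IsOpen U ∧ U.Nonempty ∧ ∀ᶠ x in residual X, x ∈ U → x ∈ A := by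
  obtain ⟨U, hUo, hAU⟩ := hBP.residualEq_isOpen
  refine ⟨U, hUo, nonempty_iff_ne_empty.2 ?_, hAU.mem_iff.mono fun x hx => hx.2⟩
  rintro rfl
  exact hA (hAU.mem_iff.mono fun x hx => hx.not.2 (notMem_empty x))

theorem exists_mem_and_apply_mem_of_eventually_mem [BaireSpace X] {A U : Set X}
    (hUo : IsOpen U) (hU : U.Nonempty) (hAU : ∀ᶠ x in residual X, x ∈ U → x ∈ A)
    {f : X → X} (hfc : Continuous f) (hfo : IsOpenMap f) (hfU : MapsTo f U U) :
    ∃ x ∈ A, f x ∈ A := by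
  have hboth : ∀ᶠ x in residual X, (x ∈ U → x ∈ A) ∧ (f x ∈ U → f x ∈ A) :=
    hAU.and (tendsto_residual_of_isOpenMap hfc hfo hAU)
  obtain ⟨x, hxU, hxA, hfxA⟩ := (dense_of_mem_residual hboth).inter_open_nonempty U hUo hU
  exact ⟨x, hxA hxU, hfxA (hfU hxU)⟩

theorem Function.Involutive.isOpenMap {f : X → X} (hf : Involutive f) (hfc : Continuous f) :
    IsOpenMap f := fun s hs => by
  rw [hf.image_eq_preimage_symm]
  exact hs.preimage hfc

end Baire

def flipAt (n : ℕ) (x : ℕ → Bool) : ℕ → Bool := update x n (!x n)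

theorem flipAt_involutive (n : ℕ) : Involutive (flipAt n) := fun x => by
  simp [flipAt]

theorem continuous_flipAt (n : ℕ) : Continuous (flipAt n) :=
  continuous_id.update n ((continuous_of_discreteTopology (f := not)).comp (continuous_apply n))

theorem flipAt_apply_self_ne (n : ℕ) (x : ℕ → Bool) : flipAt n x n ≠ x n := by
  simp [flipAt]

theorem mapsTo_flipAt_cylinder (y : ℕ → Bool) (n : ℕ) :
    MapsTo (flipAt n) (cylinder y n) (cylinder y n) := fun x hx i hi => by
  rw [flipAt, update_of_ne hi.ne]
  exact hx i hi

theorem E0_flipAt (n : ℕ) (x : ℕ → Bool) : E0 x (flipAt n x) :=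
  eventually_atTop.2 ⟨n + 1, fun m hm => (update_of_ne (by omega) _ x).symm⟩

/-- Every `E₀`-discrete subset of `2^ω` with the Baire property is meager. -/
theorem E0_discrete_baire_meager (A : Set (ℕ → Bool))
    (hBP : BaireMeasurableSet A)
    (hA : ∀ x ∈ A, ∀ y ∈ A, E0 x y → x = y) :
    IsMeagre A := by
  by_contra hAm
  obtain ⟨U, hUo, ⟨x₀, hx₀⟩, hAU⟩ := hBP.exists_isOpen_nonempty_eventually_mem hAm
  obtain ⟨_, ⟨y, n, rfl⟩, hx₀C, hCU⟩ :=
    (isTopologicalBasis_cylinders fun _ => Bool).exists_subset_of_mem_open hx₀ hUo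
  obtain ⟨x, hxA, hfxA⟩ := exists_mem_and_apply_mem_of_eventually_mem (isOpen_cylinder _ y n)
    ⟨x₀, hx₀C⟩ (hAU.mono fun x h hx => h (hCU hx)) (continuous_flipAt n)
    ((flipAt_involutive n).isOpenMap (continuous_flipAt n)) (mapsTo_flipAt_cylinder y n)
  exact flipAt_apply_self_ne n x (congrFun (hA x hxA _ hfxA (E0_flipAt n x)) n).symm
end

section
/- Continuous reading of names for Sacks forcing: if ẋ is a Sacks-forcing name for an element of ω^ω and p is a Sacks condition, then there is q ≤ p and a continuous function F : [q] → ω^ω such that q forces that ẋ equals F applied to the generic real. -/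
/-!
Fusion. Choose perfect trees `P t ⊆ p`, indexed by finite binary addresses `t`, with splitting
nodes `N t`, such that `P (b :: t)` lies inside `P t` above `N t ++ [b]` and decides the first
`|t|` values of `ẋ`. The nodes `N t` generate a perfect tree `q ⊆ p`; every branch `x` of `q` runs
through nodes `N t` with `|t|` arbitrarily large, and above such a node `q` is contained in `P t`.
Hence the conditions `q ↾ (x ↾ k)` decide longer and longer initial segments of `ẋ`, and their
union `F x` is continuous in `x`, being read off finite initial segments of `x`. If `r ≤ q` and
`x ∈ [r]`, then `r ↾ (x ↾ k)` is below both `r` and `q ↾ (x ↾ k)`, so `ẋ r` agrees with `F x`.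
-/

def IsTree (T : Set (List Bool)) : Prop :=
  ∀ s ∈ T, ∀ t : List Bool, t <+: s → t ∈ T

def Splits (T : Set (List Bool)) (t : List Bool) : Prop :=
  t ∈ T ∧ t ++ [false] ∈ T ∧ t ++ [true] ∈ T

/-- Sacks conditions: perfect subtrees of `2^{<ω}`. -/
def PerfectTree (T : Set (List Bool)) : Prop :=
  T.Nonempty ∧ IsTree T ∧ ∀ s ∈ T, ∃ t, s <+: t ∧ Splits T t

def branches (T : Set (List Bool)) : Set (ℕ → Bool) :=
  {x | ∀ n : ℕ, (List.ofFn fun i : Fin n => x i) ∈ T}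

open List Topology

theorem List.IsSuffix.rel_of_forall_cons {α β : Type*} {r : β → β → Prop} [Std.Refl r]
    [IsTrans β r] {f : List α → β} (hf : ∀ a t, r (f t) (f (a :: t))) {t t' : List α}
    (h : t <:+ t') : r (f t) (f t') := by
  obtain ⟨u, rfl⟩ := h
  induction u with
  | nil => exact refl _
  | cons a u ih => exact _root_.trans ih (hf a (u ++ t))

theorem List.IsSuffix.exists_cons_suffix {α : Type*} {t t' : List α} (h : t <:+ t')
    (hne : t ≠ t') : ∃ a, a :: t <:+ t' := by
  obtain ⟨u, rfl⟩ := h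
  rcases eq_nil_or_concat u with rfl | ⟨L, a, rfl⟩
  · simp at hne
  · exact ⟨a, L, by simp⟩

theorem List.prefix_of_comparable_of_length_le {α : Type*} {s u : List α}
    (h : s <+: u ∨ u <+: s) (hl : s.length ≤ u.length) : s <+: u := by
  rcases h with h | h
  · exact h
  · rw [h.eq_of_length (le_antisymm h.length_le hl)]

section InitialSegments

variable {α : Type*} (x : ℕ → α)

def initSeg (n : ℕ) : List α := List.ofFn fun i : Fin n => x i

@[simp] theorem length_initSeg (n : ℕ) : (initSeg x n).length = n := by simp [initSeg]

theorem initSeg_succ (n : ℕ) : initSeg x (n + 1) = initSeg x n ++ [x n] := by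
  rw [initSeg, List.ofFn_succ']
  simp only [Fin.val_castSucc, Fin.val_last, List.concat_eq_append]
  rfl

theorem initSeg_prefix_initSeg {m n : ℕ} (h : m ≤ n) : initSeg x m <+: initSeg x n := by
  induction n, h using Nat.le_induction with
  | base => exact prefix_rfl
  | succ n _ ih => exact ih.trans (initSeg_succ x n ▸ prefix_append _ _)

theorem initSeg_length_eq_of_prefix {s : List α} {n : ℕ} (h : s <+: initSeg x n) :
    initSeg x s.length = s :=
  (prefix_of_prefix_length_le (initSeg_prefix_initSeg x (by simpa using h.length_le)) h
    (by simp)).eq_of_length (by simp)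

theorem initSeg_eq_of_mem_cylinder {y : ℕ → α} {n : ℕ} (hy : y ∈ PiNat.cylinder x n) :
    initSeg y n = initSeg x n :=
  congrArg List.ofFn (funext fun i => PiNat.mem_cylinder_iff.1 hy i i.isLt)

end InitialSegments

theorem initSeg_mem {x : ℕ → Bool} {T : Set (List Bool)} (hx : x ∈ branches T) (n : ℕ) :
    initSeg x n ∈ T :=
  hx n

section Trees

def subtreeAt (T : Set (List Bool)) (s : List Bool) : Set (List Bool) :=
  {u ∈ T | u <+: s ∨ s <+: u}

variable {T T' : Set (List Bool)} {s s' t u : List Bool}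

theorem subtreeAt_subset : subtreeAt T s ⊆ T := fun _ hu => hu.1

theorem subtreeAt_mono (h : T ⊆ T') : subtreeAt T s ⊆ subtreeAt T' s :=
  fun _ hu => ⟨h hu.1, hu.2⟩

theorem subtreeAt_anti (h : s <+: s') : subtreeAt T s' ⊆ subtreeAt T s := by
  rintro u ⟨hu, hu' | hu'⟩
  · exact ⟨hu, prefix_or_prefix_of_prefix hu' h⟩
  · exact ⟨hu, Or.inr (h.trans hu')⟩

theorem PerfectTree.mem_of_prefix (hT : PerfectTree T) (ht : t ∈ T) (h : u <+: t) : u ∈ T :=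
  hT.2.1 t ht u h

theorem PerfectTree.subtreeAt_of_mem (hT : PerfectTree T) (hs : s ∈ T) :
    PerfectTree (subtreeAt T s) := by
  refine ⟨⟨s, hs, Or.inl prefix_rfl⟩,
    fun u ⟨hu, hus⟩ v hv => ⟨hT.mem_of_prefix hu hv, ?_⟩, ?_⟩
  · rcases hus with h | h
    · exact Or.inl (hv.trans h)
    · exact prefix_or_prefix_of_prefix hv h
  · rintro u ⟨hu, hus⟩
    obtain ⟨w, hsw, huw, hw⟩ : ∃ w, s <+: w ∧ u <+: w ∧ w ∈ T := by
      rcases hus with h | h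
      · exact ⟨s, prefix_rfl, h, hs⟩
      · exact ⟨u, h, prefix_rfl, hu⟩
    obtain ⟨v, hwv, hv, hv0, hv1⟩ := hT.2.2 w hw
    have hsv : s <+: v := hsw.trans hwv
    exact ⟨v, huw.trans hwv, ⟨hv, Or.inr hsv⟩,
      ⟨hv0, Or.inr (hsv.trans (prefix_append _ _))⟩, ⟨hv1, Or.inr (hsv.trans (prefix_append _ _))⟩⟩

theorem Splits.append_mem (h : Splits T t) (b : Bool) : t ++ [b] ∈ T := by
  cases b
  exacts [h.2.1, h.2.2]

theorem Splits.prefix_of_subset_subtreeAt (h : Splits T u) (hT : T ⊆ subtreeAt T' s) :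
    s <+: u := by
  -- were `u` shorter than `s`, both of its children would be initial segments of `s`
  rcases le_or_gt s.length u.length with hl | hl
  · exact prefix_of_comparable_of_length_le (hT h.1).2.symm hl
  · have hb (b : Bool) : u ++ [b] <+: s :=
      prefix_of_comparable_of_length_le (hT (h.append_mem b)).2 (by simpa using hl)
    simpa using prefix_of_prefix_length_le (hb false) (hb true) (by simp)

theorem PerfectTree.exists_splits (hT : PerfectTree T) : ∃ t, Splits T t := by
  obtain ⟨⟨u, hu⟩, -, hsplit⟩ := hT
  obtain ⟨t, -, ht⟩ := hsplit u hu
  exact ⟨t, ht⟩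

noncomputable def splitNode (T : Set (List Bool)) : List Bool := Classical.epsilon (Splits T)

theorem PerfectTree.splits_splitNode (hT : PerfectTree T) : Splits T (splitNode T) :=
  Classical.epsilon_spec hT.exists_splits

theorem PerfectTree.subtreeAt_splitNode_append (hT : PerfectTree T) (b : Bool) :
    PerfectTree (subtreeAt T (splitNode T ++ [b])) :=
  hT.subtreeAt_of_mem (hT.splits_splitNode.append_mem b)

end Trees

section SplittingSystems

/-- Addresses are read most recent bit first: `N (b :: t)` lies above the `b`-child of `N t`. -/
def IsSplittingSystem (N : List Bool → List Bool) : Prop :=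
  ∀ b t, N t ++ [b] <+: N (b :: t)

def downClosure (N : List Bool → List Bool) : Set (List Bool) := {s | ∃ t, s <+: N t}

variable {N : List Bool → List Bool} {t t' : List Bool}

theorem IsSplittingSystem.prefix_of_suffix (hN : IsSplittingSystem N) (h : t <:+ t') :
    N t <+: N t' :=
  h.rel_of_forall_cons (r := (· <+: ·)) fun b t => (prefix_append _ _).trans (hN b t)

theorem IsSplittingSystem.suffix_of_prefix (hN : IsSplittingSystem N) (h : N t <+: N t') :
    t <:+ t' := by
  induction t with
  | nil => exact nil_suffix
  | cons b t ih =>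
    have hb : N t ++ [b] <+: N t' := (hN b t).trans h
    have ht : t <:+ t' := ih ((prefix_append _ _).trans hb)
    obtain ⟨c, hc⟩ := ht.exists_cons_suffix (by rintro rfl; simpa using hb.length_le)
    have hc' : N t ++ [c] <+: N t' := (hN c t).trans (hN.prefix_of_suffix hc)
    obtain rfl : b = c := by simpa using prefix_of_prefix_length_le hb hc' (by simp)
    exact hc

theorem IsSplittingSystem.perfectTree_downClosure (hN : IsSplittingSystem N) :
    PerfectTree (downClosure N) :=
  ⟨⟨N [], [], prefix_rfl⟩, fun _ ⟨t, hs⟩ _ hu => ⟨t, hu.trans hs⟩,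
    fun _ ⟨t, hs⟩ =>
      ⟨N t, hs, ⟨t, prefix_rfl⟩, ⟨false :: t, hN _ _⟩, ⟨true :: t, hN _ _⟩⟩⟩

theorem IsSplittingSystem.exists_initSeg_eq (hN : IsSplittingSystem N) {x : ℕ → Bool}
    (hx : x ∈ branches (downClosure N)) (k : ℕ) :
    ∃ t : List Bool, t.length = k ∧ initSeg x (N t).length = N t := by
  induction k with
  | zero =>
    obtain ⟨t', ht'⟩ := hx (N []).length
    refine ⟨[], rfl, initSeg_length_eq_of_prefix x (n := (N []).length) ?_⟩
    exact prefix_of_prefix_length_le (hN.prefix_of_suffix nil_suffix) ht' (by simp)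
  | succ k ih =>
    obtain ⟨t, rfl, ht⟩ := ih
    -- Some `N t'` extends `x ↾ m`, hence `N t`; so `t'` extends some `b :: t`, and
    -- `N (b :: t)`, being at most `m` long, is an initial segment of `x`.
    set m := max (N (false :: t)).length (N (true :: t)).length
    have hlt : (N t).length < m :=
      lt_of_lt_of_le (by simpa using (hN false t).length_le) (le_max_left _ _)
    obtain ⟨t', ht'⟩ := hx m
    have htt' : t <:+ t' :=
      hN.suffix_of_prefix ((ht ▸ initSeg_prefix_initSeg x hlt.le).trans ht')
    have hne : t ≠ t' := by
      rintro rfl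
      exact lt_irrefl _ (hlt.trans_le (by simpa using ht'.length_le))
    obtain ⟨b, hb⟩ := htt'.exists_cons_suffix hne
    have hbm : (N (b :: t)).length ≤ m := by cases b <;> simp [m]
    exact ⟨b :: t, rfl, initSeg_length_eq_of_prefix x
      (prefix_of_prefix_length_le (hN.prefix_of_suffix hb) ht' (by simpa using hbm))⟩

end SplittingSystems

section Fusion

def IsShrinking (D : ℕ → Set (Set (List Bool)))
    (shrink : ℕ → Set (List Bool) → Set (List Bool)) : Prop :=
  ∀ n T, PerfectTree T → PerfectTree (shrink n T) ∧ shrink n T ⊆ T ∧ shrink n T ∈ D n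

noncomputable def fusionTree (shrink : ℕ → Set (List Bool) → Set (List Bool))
    (p : Set (List Bool)) : List Bool → Set (List Bool)
  | [] => shrink 0 p
  | b :: t => shrink (t.length + 1)
      (subtreeAt (fusionTree shrink p t) (splitNode (fusionTree shrink p t) ++ [b]))

variable {D : ℕ → Set (Set (List Bool))} {shrink : ℕ → Set (List Bool) → Set (List Bool)}
  {p : Set (List Bool)}

theorem IsShrinking.perfectTree_fusionTree (hs : IsShrinking D shrink) (hp : PerfectTree p) :
    ∀ t, PerfectTree (fusionTree shrink p t)
  | [] => (hs 0 p hp).1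
  | b :: t => (hs _ _ ((hs.perfectTree_fusionTree hp t).subtreeAt_splitNode_append b)).1

theorem IsShrinking.fusionTree_mem (hs : IsShrinking D shrink) (hp : PerfectTree p) :
    ∀ t, fusionTree shrink p t ∈ D t.length
  | [] => (hs 0 p hp).2.2
  | b :: t => (hs _ _ ((hs.perfectTree_fusionTree hp t).subtreeAt_splitNode_append b)).2.2

theorem IsShrinking.fusionTree_cons_subset (hs : IsShrinking D shrink) (hp : PerfectTree p)
    (b : Bool) (t : List Bool) :
    fusionTree shrink p (b :: t) ⊆
      subtreeAt (fusionTree shrink p t) (splitNode (fusionTree shrink p t) ++ [b]) :=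
  (hs _ _ ((hs.perfectTree_fusionTree hp t).subtreeAt_splitNode_append b)).2.1

theorem IsShrinking.fusionTree_anti (hs : IsShrinking D shrink) (hp : PerfectTree p)
    {t t' : List Bool} (h : t <:+ t') : fusionTree shrink p t' ⊆ fusionTree shrink p t :=
  h.rel_of_forall_cons (r := fun A B : Set (List Bool) => A ⊇ B) fun b t =>
    (hs.fusionTree_cons_subset hp b t).trans subtreeAt_subset

theorem IsShrinking.isSplittingSystem (hs : IsShrinking D shrink) (hp : PerfectTree p) :
    IsSplittingSystem fun t => splitNode (fusionTree shrink p t) := fun b t =>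
  (hs.perfectTree_fusionTree hp (b :: t)).splits_splitNode.prefix_of_subset_subtreeAt
    (hs.fusionTree_cons_subset hp b t)

theorem IsShrinking.downClosure_subset (hs : IsShrinking D shrink) (hp : PerfectTree p) :
    downClosure (fun t => splitNode (fusionTree shrink p t)) ⊆ p := by
  rintro u ⟨t, hu⟩
  have hP := hs.perfectTree_fusionTree hp t
  exact (hs.fusionTree_anti hp nil_suffix).trans (hs 0 p hp).2.1
    (hP.mem_of_prefix hP.splits_splitNode.1 hu)

theorem IsShrinking.subtreeAt_downClosure_subset (hs : IsShrinking D shrink)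
    (hp : PerfectTree p) (t : List Bool) :
    subtreeAt (downClosure fun t => splitNode (fusionTree shrink p t))
      (splitNode (fusionTree shrink p t)) ⊆ fusionTree shrink p t := by
  rintro u ⟨⟨t', hu⟩, hut | htu⟩
  · have hP := hs.perfectTree_fusionTree hp t
    exact hP.mem_of_prefix hP.splits_splitNode.1 hut
  · have hP := hs.perfectTree_fusionTree hp t'
    exact hs.fusionTree_anti hp ((hs.isSplittingSystem hp).suffix_of_prefix (htu.trans hu))
      (hP.mem_of_prefix hP.splits_splitNode.1 hu)

theorem exists_fusion (D : ℕ → Set (Set (List Bool)))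
    (hD : ∀ n T, PerfectTree T → ∃ T', PerfectTree T' ∧ T' ⊆ T ∧ T' ∈ D n)
    {p : Set (List Bool)} (hp : PerfectTree p) :
    ∃ q, PerfectTree q ∧ q ⊆ p ∧ ∀ x ∈ branches q, ∀ n, ∃ k T,
      PerfectTree T ∧ T ∈ D n ∧ subtreeAt q (initSeg x k) ⊆ T := by
  choose! shrink hs using hD
  have hN := IsShrinking.isSplittingSystem hs hp
  refine ⟨_, hN.perfectTree_downClosure, IsShrinking.downClosure_subset hs hp,
    fun x hx n => ?_⟩
  obtain ⟨t, rfl, ht⟩ := hN.exists_initSeg_eq hx n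
  exact ⟨_, _, IsShrinking.perfectTree_fusionTree hs hp t, IsShrinking.fusionTree_mem hs hp t,
    ht ▸ IsShrinking.subtreeAt_downClosure_subset hs hp t⟩

end Fusion

section Reading

def IsCoherent (xdot : Set (List Bool) → List ℕ) : Prop :=
  ∀ p q, PerfectTree p → PerfectTree q → q ⊆ p → xdot p <+: xdot q

def DecidesAlongBranches (xdot : Set (List Bool) → List ℕ) (q : Set (List Bool)) : Prop :=
  ∀ x ∈ branches q, ∀ i, ∃ k, i < (xdot (subtreeAt q (initSeg x k))).length

open Classical in
noncomputable def reading (xdot : Set (List Bool) → List ℕ) (q : Set (List Bool))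
    (x : ℕ → Bool) (i : ℕ) : ℕ :=
  if h : ∃ k, i < (xdot (subtreeAt q (initSeg x k))).length then
    (xdot (subtreeAt q (initSeg x (Nat.find h))))[i]'(Nat.find_spec h)
  else 0

variable {xdot : Set (List Bool) → List ℕ} {q : Set (List Bool)}

theorem reading_eq (hmono : IsCoherent xdot) (hq : PerfectTree q) {x : ℕ → Bool}
    (hx : x ∈ branches q) {i k : ℕ}
    (hk : i < (xdot (subtreeAt q (initSeg x k))).length) :
    reading xdot q x i = (xdot (subtreeAt q (initSeg x k)))[i] := by
  have h : ∃ k, i < (xdot (subtreeAt q (initSeg x k))).length := ⟨k, hk⟩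
  rw [reading, dif_pos h]
  exact (hmono _ _ (hq.subtreeAt_of_mem (initSeg_mem hx _))
    (hq.subtreeAt_of_mem (initSeg_mem hx _))
    (subtreeAt_anti (initSeg_prefix_initSeg x (Nat.find_min' h hk)))).getElem _

theorem continuousOn_reading
    (hmono : IsCoherent xdot) (hq : PerfectTree q)
    (hlen : DecidesAlongBranches xdot q) :
    ContinuousOn (reading xdot q) (branches q) := by
  refine continuousOn_pi.2 fun i x hx => ?_
  obtain ⟨k, hk⟩ := hlen x hx i
  have hconst : (fun y => reading xdot q y i) =ᶠ[𝓝[branches q] x]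
      fun _ => reading xdot q x i := by
    filter_upwards [mem_nhdsWithin_of_mem_nhds ((PiNat.isOpen_cylinder _ x k).mem_nhds
      (PiNat.self_mem_cylinder x k)), self_mem_nhdsWithin] with y hy hyq
    have hseg := initSeg_eq_of_mem_cylinder x hy
    rw [reading_eq hmono hq hx hk, reading_eq hmono hq hyq (k := k) (by rwa [hseg])]
    simp_rw [hseg]
  exact continuousWithinAt_const.congr_of_eventuallyEq hconst rfl

theorem reading_eq_of_subset
    (hmono : IsCoherent xdot) (hq : PerfectTree q)
    (hlen : DecidesAlongBranches xdot q)
    {r : Set (List Bool)} (hr : PerfectTree r) (hrq : r ⊆ q) {x : ℕ → Bool}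
    (hx : x ∈ branches r) {i : ℕ} (hi : i < (xdot r).length) :
    reading xdot q x i = (xdot r)[i] := by
  have hxq : x ∈ branches q := fun n => hrq (hx n)
  obtain ⟨k, hk⟩ := hlen x hxq i
  have hr' : PerfectTree (subtreeAt r (initSeg x k)) := hr.subtreeAt_of_mem (initSeg_mem hx k)
  rw [reading_eq hmono hq hxq hk,
    (hmono _ _ (hq.subtreeAt_of_mem (initSeg_mem hxq k)) hr' (subtreeAt_mono hrq)).getElem hk,
    (hmono _ _ hr hr' subtreeAt_subset).getElem hi]

end Reading

/-- The name `ẋ` is encoded by the initial segment `xdot p` of its value decided by each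
condition `p`; "`q` forces `ẋ = F(s_G)`" becomes: every `r ≤ q` decides values agreeing with `F`
on `[r]`. -/
theorem continuous_reading_sacks (xdot : Set (List Bool) → List ℕ)
    (hmono : ∀ p q, PerfectTree p → PerfectTree q → q ⊆ p → xdot p <+: xdot q)
    (htotal : ∀ p, PerfectTree p → ∀ n : ℕ, ∃ q, PerfectTree q ∧ q ⊆ p ∧ n ≤ (xdot q).length)
    (p : Set (List Bool)) (hp : PerfectTree p) :
    ∃ q, PerfectTree q ∧ q ⊆ p ∧ ∃ F : (ℕ → Bool) → ℕ → ℕ,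
      ContinuousOn F (branches q) ∧
      ∀ r, PerfectTree r → r ⊆ q → ∀ x ∈ branches r,
        ∀ i : Fin (xdot r).length, F x i = (xdot r).get i := by
  obtain ⟨q, hq, hqp, hfusion⟩ := exists_fusion (fun n => {T | n < (xdot T).length})
    (fun n T hT => htotal T hT (n + 1)) hp
  have hlen : DecidesAlongBranches xdot q := by
    intro x hx i
    obtain ⟨k, T, hT, hiT, hqT⟩ := hfusion x hx i
    have hqk := hq.subtreeAt_of_mem (initSeg_mem hx k)
    exact ⟨k, hiT.trans_le (hmono _ _ hT hqk hqT).length_le⟩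
  exact ⟨q, hq, hqp, reading xdot q, continuousOn_reading hmono hq hlen,
    fun r hr hrq x hx i => reading_eq_of_subset hmono hq hlen hr hrq hx i.isLt⟩
end
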